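/- Let Z be a normal random variable with mean μ ∈ ℝ and standard deviation σ > 0, and let a be a real number. Then E[|Z| e^{-a|Z|}] = −aσ² e^{a²σ²/2} ( e^{aμ} Φ(−(μ + aσ²)/σ) + e^{-aμ} Φ((μ − aσ²)/σ) ) − μ e^{a²σ²/2} ( e^{aμ} Φ(−(μ + aσ²)/σ) − e^{-aμ} Φ((μ − aσ²)/σ) ) + σ √(2/π) e^{-μ²/(2σ²)}, where Φ denotes the cumulative distribution function of the standard normal distribution. -/

import Mathlib

/-! Split `ℝ` at `0`: the reflection `x ↦ -x` turns the negative half-line for `N(μ, σ²)`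
into the positive half-line for `N(-μ, σ²)`. On `(0, ∞)`, completing the square gives
`e^{-ax} φ_{μ,σ²}(x) = e^{a²σ²/2 - aμ} φ_{m,σ²}(x)` with `m = μ - aσ²` (exponential tilting),
and `∫_{x>0} x φ_{m,σ²}(x) dx = m Φ(m/σ) + σ² φ_{m,σ²}(0)` because `-σ² φ_{m,σ²}` is an
antiderivative of `(x - m) φ_{m,σ²}(x)`. -/

open MeasureTheory ProbabilityTheory

noncomputable def stdNormalCDF (z : ℝ) : ℝ :=
  ∫ y in Set.Iic z, (Real.sqrt (2 * Real.pi))⁻¹ * Real.exp (-y ^ 2 / 2)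

open Real Set Filter
open scoped NNReal

lemma integral_comp_abs_mul {f g : ℝ → ℝ} (hf : Integrable (fun x => f x * g x))
    (hf' : Integrable (fun x => f x * g (-x))) :
    ∫ x, f |x| * g x = (∫ x in Ioi 0, f x * g x) + ∫ x in Ioi 0, f x * g (-x) := by
  have hIic : IntegrableOn (fun x => f |x| * g x) (Iic 0) :=
    hf'.comp_neg.integrableOn.congr_fun
      (fun x hx => by simp [abs_of_nonpos (mem_Iic.mp hx)]) measurableSet_Iic
  have hIoi : IntegrableOn (fun x => f |x| * g x) (Ioi 0) :=
    hf.integrableOn.congr_fun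
      (fun x hx => by simp [abs_of_pos (mem_Ioi.mp hx)]) measurableSet_Ioi
  have hpos : ∫ x in Ioi 0, f |x| * g x = ∫ x in Ioi 0, f x * g x :=
    setIntegral_congr_fun measurableSet_Ioi fun x hx => by simp [abs_of_pos (mem_Ioi.mp hx)]
  have hneg : ∫ x in Iic 0, f |x| * g x = ∫ x in Ioi 0, f x * g (-x) := by
    have hreflect := integral_comp_neg_Iic (0 : ℝ) (fun x => f x * g (-x))
    rw [neg_zero] at hreflect
    rw [← hreflect]
    exact setIntegral_congr_fun measurableSet_Iic fun x hx => by
      simp [abs_of_nonpos (mem_Iic.mp hx)]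
  rw [← intervalIntegral.integral_Iic_add_Ioi hIic hIoi, hpos, hneg, add_comm]

namespace ProbabilityTheory

lemma stdNormalCDF_eq_integral_gaussianPDFReal (z : ℝ) :
    stdNormalCDF z = ∫ y in Iic z, gaussianPDFReal 0 1 y := by
  simp [stdNormalCDF, gaussianPDFReal]

lemma continuous_gaussianPDFReal (μ : ℝ) (v : ℝ≥0) : Continuous (gaussianPDFReal μ v) := by
  unfold gaussianPDFReal
  fun_prop

lemma gaussianPDFReal_neg (μ : ℝ) (v : ℝ≥0) (x : ℝ) :
    gaussianPDFReal μ v (-x) = gaussianPDFReal (-μ) v x := by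
  simp only [gaussianPDFReal]
  ring_nf

lemma gaussianPDFReal_eq_gaussianPDFReal_zero_one_mul (m : ℝ) {v : ℝ≥0} (hv : v ≠ 0) (x : ℝ) :
    gaussianPDFReal m v x = gaussianPDFReal 0 1 ((x - m) / √v) * (√v)⁻¹ := by
  have hv' : (0 : ℝ) < v := by positivity
  simp only [gaussianPDFReal, NNReal.coe_one, mul_one, sub_zero, div_pow, sq_sqrt hv'.le]
  rw [sqrt_mul (by positivity)]
  field_simp

lemma integral_Ioi_gaussianPDFReal (m : ℝ) {v : ℝ≥0} (hv : v ≠ 0) (c : ℝ) :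
    ∫ x in Ioi c, gaussianPDFReal m v x = stdNormalCDF ((m - c) / √v) := by
  have hσ : 0 < √(v : ℝ) := by positivity
  have hsubst : ∫ x in Ioi c, gaussianPDFReal m v x =
      ∫ y in Ioi ((c - m) / √v), gaussianPDFReal 0 1 y := by
    simp_rw [gaussianPDFReal_eq_gaussianPDFReal_zero_one_mul m hv]
    refine integral_comp_mul_deriv_Ioi (f := fun x => (x - m) / √v) (by fun_prop)
      ((tendsto_atTop_add_const_right _ (-m) tendsto_id).atTop_div_const hσ)
      (fun x _ => ((hasDerivAt_id x).sub_const m |>.div_const _).hasDerivWithinAt.congr_deriv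
        (by simp [one_div])) (continuous_gaussianPDFReal 0 1).continuousOn
      (integrable_gaussianPDFReal 0 1).integrableOn ?_
    simpa only [Function.comp_apply, ← gaussianPDFReal_eq_gaussianPDFReal_zero_one_mul m hv]
      using (integrable_gaussianPDFReal m v).integrableOn
  rw [hsubst, stdNormalCDF_eq_integral_gaussianPDFReal,
    show (m - c) / √v = -((c - m) / √v) by ring, ← integral_comp_neg_Ioi]
  simp [gaussianPDFReal_neg]

lemma hasDerivAt_gaussianPDFReal (μ : ℝ) (v : ℝ≥0) (x : ℝ) :
    HasDerivAt (gaussianPDFReal μ v) (-(x - μ) / v * gaussianPDFReal μ v x) x := by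
  have hsq : HasDerivAt (fun y => (y - μ) ^ 2) (2 * (x - μ)) x := by
    simpa using ((hasDerivAt_id x).sub_const μ).fun_pow 2
  refine ((hsq.fun_neg.div_const (2 * (v : ℝ))).exp.const_mul
    (√(2 * π * v))⁻¹).congr_deriv ?_
  simp only [gaussianPDFReal]
  ring

lemma integrable_mul_gaussianPDFReal (μ : ℝ) (v : ℝ≥0) :
    Integrable (fun x => x * gaussianPDFReal μ v x) := by
  rcases eq_or_ne v 0 with rfl | hv
  · simp
  have h := (memLp_id_gaussianReal (μ := μ) (v := v) 1).integrable le_rfl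
  rw [gaussianReal_of_var_ne_zero μ hv, integrable_withDensity_iff_integrable_smul'
    (measurable_gaussianPDF μ v) (ae_of_all _ fun _ => gaussianPDF_lt_top)] at h
  simpa [toReal_gaussianPDF, mul_comm] using h

lemma integrable_sub_mul_gaussianPDFReal (m : ℝ) (v : ℝ≥0) :
    Integrable (fun x => (x - m) * gaussianPDFReal m v x) := by
  simpa only [sub_mul, Pi.sub_def] using
    (integrable_mul_gaussianPDFReal m v).sub ((integrable_gaussianPDFReal m v).const_mul m)

lemma integral_Ioi_sub_mul_gaussianPDFReal (m : ℝ) (v : ℝ≥0) (c : ℝ) :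
    ∫ x in Ioi c, (x - m) * gaussianPDFReal m v x = v * gaussianPDFReal m v c := by
  rcases eq_or_ne v 0 with rfl | hv
  · simp
  have hderiv : ∀ x, HasDerivAt (fun y => -(v : ℝ) * gaussianPDFReal m v y)
      ((x - m) * gaussianPDFReal m v x) x := fun x =>
    ((hasDerivAt_gaussianPDFReal m v x).const_mul _).congr_deriv (by field_simp)
  have hderiv_int := (integrable_sub_mul_gaussianPDFReal m v).integrableOn (s := Ioi c)
  have hanti_int :=
    ((integrable_gaussianPDFReal m v).const_mul (-(v : ℝ))).integrableOn (s := Ioi c)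
  -- the antiderivative tends to `0` at `∞` since both it and its derivative are integrable
  rw [integral_Ioi_of_hasDerivAt_of_tendsto' (fun x _ => hderiv x) hderiv_int
    (tendsto_zero_of_hasDerivAt_of_integrableOn_Ioi (fun x _ => hderiv x) hderiv_int hanti_int)]
  ring

lemma exp_neg_mul_mul_gaussianPDFReal (μ : ℝ) (v : ℝ≥0) (a x : ℝ) :
    exp (-a * x) * gaussianPDFReal μ v x =
      exp (a ^ 2 * v / 2 - a * μ) * gaussianPDFReal (μ - a * v) v x := by
  rcases eq_or_ne v 0 with rfl | hv
  · simp
  have hv' : (v : ℝ) ≠ 0 := NNReal.coe_ne_zero.mpr hv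
  simp only [gaussianPDFReal]
  rw [mul_left_comm, mul_left_comm (exp _), ← exp_add, ← exp_add]
  congr 2
  field_simp
  ring

lemma integrable_mul_exp_neg_mul_gaussianPDFReal (μ : ℝ) (v : ℝ≥0) (a : ℝ) :
    Integrable (fun x => x * exp (-a * x) * gaussianPDFReal μ v x) := by
  simp_rw [mul_assoc, exp_neg_mul_mul_gaussianPDFReal, mul_left_comm _ (exp _)]
  exact (integrable_mul_gaussianPDFReal _ v).const_mul _

lemma integral_Ioi_mul_exp_neg_mul_gaussianPDFReal (μ : ℝ) {v : ℝ≥0} (hv : v ≠ 0) (a c : ℝ) :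
    ∫ x in Ioi c, x * exp (-a * x) * gaussianPDFReal μ v x =
      exp (a ^ 2 * v / 2 - a * μ) * (μ - a * v) * stdNormalCDF ((μ - a * v - c) / √v) +
        v * exp (-a * c) * gaussianPDFReal μ v c := by
  have htilt_c := exp_neg_mul_mul_gaussianPDFReal μ v a c
  set m := μ - a * v
  set K := a ^ 2 * v / 2 - a * μ
  have hsplit : ∀ x, x * exp (-a * x) * gaussianPDFReal μ v x =
      exp K * ((x - m) * gaussianPDFReal m v x) + exp K * m * gaussianPDFReal m v x := by
    intro x
    rw [mul_assoc, exp_neg_mul_mul_gaussianPDFReal]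
    ring
  simp_rw [hsplit]
  rw [integral_add ((integrable_sub_mul_gaussianPDFReal m v).const_mul _).integrableOn
      ((integrable_gaussianPDFReal m v).const_mul _).integrableOn,
    integral_const_mul, integral_const_mul, integral_Ioi_sub_mul_gaussianPDFReal,
    integral_Ioi_gaussianPDFReal m hv]
  linear_combination -(v : ℝ) * htilt_c

lemma integral_abs_mul_exp_neg_mul_abs_gaussianReal (μ : ℝ) {v : ℝ≥0} (hv : v ≠ 0) (a : ℝ) :
    ∫ x, |x| * exp (-a * |x|) ∂gaussianReal μ v =
      (∫ x in Ioi 0, x * exp (-a * x) * gaussianPDFReal μ v x) +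
        ∫ x in Ioi 0, x * exp (-a * x) * gaussianPDFReal (-μ) v x := by
  have hsplit := integral_comp_abs_mul (f := fun x => x * exp (-a * x))
    (g := gaussianPDFReal μ v) (integrable_mul_exp_neg_mul_gaussianPDFReal μ v a)
    (by simpa only [gaussianPDFReal_neg] using integrable_mul_exp_neg_mul_gaussianPDFReal (-μ) v a)
  simp only [gaussianPDFReal_neg] at hsplit
  rw [integral_gaussianReal_eq_integral_smul hv, ← hsplit]
  simp_rw [smul_eq_mul, mul_comm (gaussianPDFReal _ _ _)]

lemma sq_mul_gaussianPDFReal_toNNReal_sq (μ : ℝ) {σ : ℝ} (hσ : 0 < σ) (x : ℝ) :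
    σ ^ 2 * gaussianPDFReal μ (σ ^ 2).toNNReal x =
      σ * √(2 / π) / 2 * exp (-(x - μ) ^ 2 / (2 * σ ^ 2)) := by
  have hsqrt : √(2 / π) * √(2 * π) = 2 := by
    rw [← sqrt_mul (by positivity), show 2 / π * (2 * π) = 2 ^ 2 by field_simp,
      sqrt_sq zero_le_two]
  simp only [gaussianPDFReal, Real.coe_toNNReal _ (sq_nonneg σ)]
  rw [sqrt_mul (by positivity), sqrt_sq hσ.le]
  field_simp
  linear_combination -hsqrt

end ProbabilityTheory

/-- For `Z ~ N(μ, σ²)` with `σ > 0` and `a : ℝ`,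
`E[|Z| e^{-a|Z|}] = −aσ² e^{a²σ²/2} (e^{aμ}Φ(−(μ+aσ²)/σ) + e^{-aμ}Φ((μ−aσ²)/σ))
  − μ e^{a²σ²/2} (e^{aμ}Φ(−(μ+aσ²)/σ) − e^{-aμ}Φ((μ−aσ²)/σ)) + σ √(2/π) e^{−μ²/(2σ²)}`. -/
theorem expectation_abs_mul_exp_neg_mul_abs_normal (μ : ℝ) (σ : ℝ) (hσ : 0 < σ) (a : ℝ) :
    ∫ x, |x| * Real.exp (-a * |x|) ∂(gaussianReal μ (Real.toNNReal (σ ^ 2))) =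
      -(a * σ ^ 2) * Real.exp (a ^ 2 * σ ^ 2 / 2) *
          (Real.exp (a * μ) * stdNormalCDF (-((μ + a * σ ^ 2) / σ)) +
            Real.exp (-(a * μ)) * stdNormalCDF ((μ - a * σ ^ 2) / σ)) -
        μ * Real.exp (a ^ 2 * σ ^ 2 / 2) *
          (Real.exp (a * μ) * stdNormalCDF (-((μ + a * σ ^ 2) / σ)) -
            Real.exp (-(a * μ)) * stdNormalCDF ((μ - a * σ ^ 2) / σ)) +
        σ * Real.sqrt (2 / Real.pi) * Real.exp (-μ ^ 2 / (2 * σ ^ 2)) := by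
  have hv : (σ ^ 2).toNNReal ≠ 0 := by simpa using hσ.ne'
  have hv_coe : ((σ ^ 2).toNNReal : ℝ) = σ ^ 2 := Real.coe_toNNReal _ (sq_nonneg σ)
  have hσ_eq : √((σ ^ 2).toNNReal : ℝ) = σ := by rw [hv_coe, sqrt_sq hσ.le]
  rw [integral_abs_mul_exp_neg_mul_abs_gaussianReal μ hv,
    integral_Ioi_mul_exp_neg_mul_gaussianPDFReal μ hv,
    integral_Ioi_mul_exp_neg_mul_gaussianPDFReal (-μ) hv, hσ_eq, hv_coe,
    show a ^ 2 * σ ^ 2 / 2 - a * μ = a ^ 2 * σ ^ 2 / 2 + -(a * μ) by ring,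
    show a ^ 2 * σ ^ 2 / 2 - a * -μ = a ^ 2 * σ ^ 2 / 2 + a * μ by ring, exp_add, exp_add,
    show (-μ - a * σ ^ 2 - 0) / σ = -((μ + a * σ ^ 2) / σ) by ring]
  simp only [sub_zero, mul_zero, exp_zero, mul_one]
  rw [sq_mul_gaussianPDFReal_toNNReal_sq μ hσ, sq_mul_gaussianPDFReal_toNNReal_sq (-μ) hσ]
  simp only [zero_sub, neg_neg, neg_sq]
  ring
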